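/- arXiv:2507.08381 — 13 statements merged into one kernel-verified Lean document; each statement's English description precedes it below -/
import Mathlib

section
/- The semiring L₂ satisfies the identity u ≈ v if and only if H(u) = H(v). -/
/-- The value in `Bool` (under multiplication `mul` and assignment `φ`) of a word,
i.e. a nonempty list of variables: the product of the images of its letters, in order.
(The value `false` on the empty list is junk; words are required to be nonempty.) -/
def wordVal (mul : Bool → Bool → Bool) (φ : ℕ → Bool) : List ℕ → Bool
  | [] => false
  | a :: rest => rest.foldl (fun acc x => mul acc (φ x)) (φ a)

/-- The value of a term, i.e. a nonempty list of words: the sum (under `add`) of the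
values of its entries. (The value `false` on the empty list is junk; terms are
required to be nonempty.) -/
def termVal (add mul : Bool → Bool → Bool) (φ : ℕ → Bool) : List (List ℕ) → Bool
  | [] => false
  | w :: rest => rest.foldl (fun acc q => add acc (wordVal mul φ q)) (wordVal mul φ w)

/-- The two-element semiring on `Bool` with addition `add` and multiplication `mul`
satisfies the identity `u ≈ v`. -/
def Satisfies (add mul : Bool → Bool → Bool) (u v : List (List ℕ)) : Prop :=
  ∀ φ : ℕ → Bool, termVal add mul φ u = termVal add mul φ v

private lemma foldl_const {α β : Type} (l : List α) (b : β) :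
    l.foldl (fun acc _ => acc) b = b := by
  induction l generalizing b with
  | nil => rfl
  | cons a t ih => simp [List.foldl, ih]

private lemma wordVal_left (φ : ℕ → Bool) (a : ℕ) (q : List ℕ) :
    wordVal (fun x _ => x) φ (a :: q) = φ a := by
  simp only [wordVal]
  exact foldl_const q (φ a)

private lemma foldl_or {α : Type} (f : α → Bool) (l : List α) (b : Bool) :
    l.foldl (fun acc x => acc || f x) b = (b || l.any f) := by
  induction l generalizing b with
  | nil => simp
  | cons a t ih => simp [List.foldl, ih, Bool.or_assoc]

private lemma any_congr' {α : Type} {f g : α → Bool} {l : List α}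
    (h : ∀ x ∈ l, f x = g x) : l.any f = l.any g := by
  induction l with
  | nil => rfl
  | cons a t ih =>
    rw [List.any_cons, List.any_cons, h a (by simp), ih (fun x hx => h x (by simp [hx]))]

private lemma termVal_any (φ : ℕ → Bool) (u : List (List ℕ)) (hu' : ∀ w ∈ u, w ≠ []) :
    termVal (fun x y => x || y) (fun x _ => x) φ u = u.any (fun q => φ q.headI) := by
  cases u with
  | nil => rfl
  | cons w rest =>
    simp only [termVal, foldl_or]
    have hw : wordVal (fun x _ => x) φ w = φ w.headI := by
      cases w with
      | nil => exact absurd rfl (hu' [] (by simp))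
      | cons a q => simp [wordVal_left]
    have : ∀ q ∈ rest, wordVal (fun x _ => x) φ q = φ q.headI := by
      intro q hq
      cases q with
      | nil => exact absurd rfl (hu' [] (by simp [hq]))
      | cons a t => simp [wordVal_left]
    rw [hw, List.any_cons]
    congr 1
    exact any_congr' this

private lemma mem_headset_iff (u : List (List ℕ)) (hu' : ∀ w ∈ u, w ≠ []) (n : ℕ) :
    (∃ w ∈ u, w.head? = some n) ↔ ∃ w ∈ u, w.headI = n := by
  constructor
  · rintro ⟨w, hw, h⟩
    refine ⟨w, hw, ?_⟩
    cases w with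
    | nil => simp at h
    | cons a t => simpa using h
  · rintro ⟨w, hw, h⟩
    refine ⟨w, hw, ?_⟩
    cases w with
    | nil => exact absurd rfl (hu' [] hw)
    | cons a t => simp at h ⊢; exact h

/-- Lemma 1.1(1): `L₂` (addition `∨`, multiplication `x·y = x`) satisfies `u ≈ v`
iff `H(u) = H(v)`, where `H` is the set of head letters of the entries. -/
theorem L2_satisfies_iff (u v : List (List ℕ))
    (hu : u ≠ []) (hv : v ≠ []) (hu' : ∀ w ∈ u, w ≠ []) (hv' : ∀ w ∈ v, w ≠ []) :
    Satisfies (fun x y => x || y) (fun x _ => x) u v ↔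
      {n : ℕ | ∃ w ∈ u, w.head? = some n} = {n : ℕ | ∃ w ∈ v, w.head? = some n} := by
  constructor
  · intro hsat
    ext n
    simp only [Set.mem_setOf_eq, mem_headset_iff u hu' n, mem_headset_iff v hv' n]
    have := hsat (fun m => decide (m = n))
    rw [termVal_any _ u hu', termVal_any _ v hv'] at this
    constructor
    · rintro ⟨w, hw, h⟩
      have h1 : u.any (fun q => decide (q.headI = n)) = true := by
        simp only [List.any_eq_true]; exact ⟨w, hw, by simp [h]⟩
      rw [this] at h1
      simp only [List.any_eq_true, decide_eq_true_eq] at h1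
      exact h1
    · rintro ⟨w, hw, h⟩
      have h1 : v.any (fun q => decide (q.headI = n)) = true := by
        simp only [List.any_eq_true]; exact ⟨w, hw, by simp [h]⟩
      rw [← this] at h1
      simp only [List.any_eq_true, decide_eq_true_eq] at h1
      exact h1
  · intro hset φ
    rw [termVal_any _ u hu', termVal_any _ v hv']
    have key : (∃ w ∈ u, φ w.headI = true) ↔ ∃ w ∈ v, φ w.headI = true := by
      constructor
      · rintro ⟨w, hw, h⟩
        have : w.headI ∈ {n : ℕ | ∃ w ∈ u, w.head? = some n} := by
          exact (mem_headset_iff u hu' _).mpr ⟨w, hw, rfl⟩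
        rw [hset] at this
        obtain ⟨w', hw', h'⟩ := (mem_headset_iff v hv' _).mp this
        exact ⟨w', hw', h' ▸ h⟩
      · rintro ⟨w, hw, h⟩
        have : w.headI ∈ {n : ℕ | ∃ w ∈ v, w.head? = some n} := by
          exact (mem_headset_iff v hv' _).mpr ⟨w, hw, rfl⟩
        rw [← hset] at this
        obtain ⟨w', hw', h'⟩ := (mem_headset_iff u hu' _).mp this
        exact ⟨w', hw', h' ▸ h⟩
    cases hu_any : u.any (fun q => φ q.headI) with
    | true =>
      simp only [List.any_eq_true] at hu_any ⊢
      exact ((List.any_eq_true).mpr (key.mp hu_any)).symm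
    | false =>
      symm
      rw [List.any_eq_false] at hu_any ⊢
      intro w hw
      simp only [Bool.not_eq_true] at hu_any ⊢
      by_contra hc
      simp only [Bool.not_eq_false] at hc
      obtain ⟨w', hw', h'⟩ := key.mpr ⟨w, hw, hc⟩
      have := hu_any w' hw'
      simp_all
end

section
/- The semiring M₂ satisfies the identity u ≈ v if and only if C(u) = C(v). -/
/-!
In `M₂` both operations are `∨`, so a term evaluates to `true` exactly when some variable
occurring in it is sent to `true`: the value depends only on `C(u)`. Conversely, the
assignment that is `true` only at `n` detects whether `n ∈ C(u)`.
-/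

theorem List.foldl_or_eq_or_any {α : Type*} (f : α → Bool) (l : List α) (b : Bool) :
    l.foldl (fun acc x => acc || f x) b = (b || l.any f) := by
  induction l generalizing b with
  | nil => simp
  | cons a l ih => simp [ih, Bool.or_assoc]

theorem wordVal_or (φ : ℕ → Bool) (w : List ℕ) :
    wordVal (· || ·) φ w = w.any φ := by
  cases w <;> simp [wordVal, List.foldl_or_eq_or_any]

theorem termVal_or_or (φ : ℕ → Bool) (u : List (List ℕ)) :
    termVal (· || ·) (· || ·) φ u = u.any (·.any φ) := by
  cases u <;> simp [termVal, wordVal_or, List.foldl_or_eq_or_any]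

theorem termVal_or_or_eq_true_iff (φ : ℕ → Bool) (u : List (List ℕ)) :
    termVal (· || ·) (· || ·) φ u = true ↔ ∃ n ∈ {n : ℕ | ∃ w ∈ u, n ∈ w}, φ n = true := by
  simp only [termVal_or_or, List.any_eq_true, Set.mem_ofPred_eq]
  exact ⟨fun ⟨w, hw, n, hn, hφ⟩ => ⟨n, ⟨w, hw, hn⟩, hφ⟩,
    fun ⟨n, ⟨w, hw, hn⟩, hφ⟩ => ⟨w, hw, n, hn, hφ⟩⟩

theorem Set.eq_iff_forall_bool_exists_mem_iff {α : Type*} {S T : Set α} :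
    S = T ↔ ∀ φ : α → Bool, (∃ n ∈ S, φ n = true) ↔ (∃ n ∈ T, φ n = true) := by
  refine ⟨fun h _ => h ▸ Iff.rfl, fun h => Set.ext fun n => ?_⟩
  classical
  simpa using h (fun m => decide (m = n))

theorem M2_satisfies_iff_general (u v : List (List ℕ)) :
    Satisfies (fun x y => x || y) (fun x y => x || y) u v ↔
      {n : ℕ | ∃ w ∈ u, n ∈ w} = {n : ℕ | ∃ w ∈ v, n ∈ w} := by
  rw [Set.eq_iff_forall_bool_exists_mem_iff]
  refine forall_congr' fun φ => ?_
  rw [Bool.eq_iff_iff, termVal_or_or_eq_true_iff, termVal_or_or_eq_true_iff]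

/-- Lemma 1.1(3): `M₂` (addition `∨`, multiplication `∨`) satisfies `u ≈ v`
iff `C(u) = C(v)`, where `C` is the set of all variables occurring. -/
theorem M2_satisfies_iff (u v : List (List ℕ))
    (hu : u ≠ []) (hv : v ≠ []) (hu' : ∀ w ∈ u, w ≠ []) (hv' : ∀ w ∈ v, w ≠ []) :
    Satisfies (fun x y => x || y) (fun x y => x || y) u v ↔
      {n : ℕ | ∃ w ∈ u, n ∈ w} = {n : ℕ | ∃ w ∈ v, n ∈ w} :=
  M2_satisfies_iff_general u v
end

section
/- Let u = [u₁,…,u_m] and v = [v₁,…,v_n] be terms. The semiring W₂ satisfies the identity u ≈ v if and only if either (m = n = 1 and c(u₁) = c(v₁)) or (m ≥ 2 and n ≥ 2). -/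
lemma foldl_band (φ : ℕ → Bool) : ∀ (l : List ℕ) (b : Bool),
    l.foldl (fun acc x => acc && φ x) b = (b && l.all φ) := by
  intro l
  induction l with
  | nil => simp
  | cons a t ih => intro b; simp [List.foldl, ih, Bool.and_assoc]

lemma wordVal_eq_all (φ : ℕ → Bool) (w : List ℕ) (hw : w ≠ []) :
    wordVal (fun x y => x && y) φ w = w.all φ := by
  cases w with
  | nil => simp at hw
  | cons a t => simp [wordVal, foldl_band]

lemma foldl_cf : ∀ (rest : List (List ℕ)) (b : Bool),
    rest.foldl (fun (_ : Bool) (_ : List ℕ) => false) b = (if rest = [] then b else false) := by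
  intro rest
  induction rest with
  | nil => intro b; rfl
  | cons a t ih => intro b; simp [List.foldl, ih]

lemma termVal_cons_cons (mul : Bool → Bool → Bool) (φ : ℕ → Bool)
    (w q : List ℕ) (rest : List (List ℕ)) :
    termVal (fun _ _ => false) mul φ (w :: q :: rest) = false := by
  show (q :: rest).foldl (fun (_ : Bool) (_ : List ℕ) => false) (wordVal mul φ w) = false
  simp [foldl_cf]

/-- Lemma 1.1(8): `W₂` (addition constantly `false`, multiplication `∧`) satisfies
`u ≈ v` iff either both are single words with the same content, or both have at
least two entries. -/
theorem W2_satisfies_iff (u v : List (List ℕ))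
    (hu : u ≠ []) (hv : v ≠ []) (hu' : ∀ w ∈ u, w ≠ []) (hv' : ∀ w ∈ v, w ≠ []) :
    Satisfies (fun _ _ => false) (fun x y => x && y) u v ↔
      ((∃ w1 w2 : List ℕ, u = [w1] ∧ v = [w2] ∧
          {n : ℕ | n ∈ w1} = {n : ℕ | n ∈ w2}) ∨
       (2 ≤ u.length ∧ 2 ≤ v.length)) := by
  match u, v with
  | [], _ => exact absurd rfl hu
  | _ :: _, [] => exact absurd rfl hv
  | [w1], [w2] =>
    constructor
    · intro hs
      left
      refine ⟨w1, w2, rfl, rfl, ?_⟩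
      have hw1 : w1 ≠ [] := hu' w1 (by simp)
      have hw2 : w2 ≠ [] := hv' w2 (by simp)
      have key : ∀ φ : ℕ → Bool, w1.all φ = w2.all φ := by
        intro φ
        have := hs φ
        simpa [termVal, wordVal_eq_all φ w1 hw1, wordVal_eq_all φ w2 hw2] using this
      ext x
      simp only [Set.mem_setOf_eq]
      constructor
      · intro hx
        have h := key (fun y => decide (y ∈ w2))
        have h2 : w2.all (fun y => decide (y ∈ w2)) = true := by
          simp [List.all_eq_true]
        rw [h2] at h
        have := (List.all_eq_true.mp h) x hx
        simpa using this
      · intro hx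
        have h := key (fun y => decide (y ∈ w1))
        have h2 : w1.all (fun y => decide (y ∈ w1)) = true := by
          simp [List.all_eq_true]
        rw [h2] at h
        have := (List.all_eq_true.mp h.symm) x hx
        simpa using this
    · rintro (⟨a, b, ha, hb, hab⟩ | ⟨h1, h2⟩)
      · obtain ⟨rfl⟩ : w1 = a := by injection ha
        obtain ⟨rfl⟩ : w2 = b := by injection hb
        intro φ
        have hw1 : w1 ≠ [] := hu' w1 (by simp)
        have hw2 : w2 ≠ [] := hv' w2 (by simp)
        have hm : ∀ n, n ∈ w1 ↔ n ∈ w2 := fun n => Set.ext_iff.mp hab n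
        simp only [termVal, List.foldl, wordVal_eq_all φ w1 hw1, wordVal_eq_all φ w2 hw2]
        rw [Bool.eq_iff_iff]
        simp only [List.all_eq_true]
        exact ⟨fun h x hx => h x ((hm x).mpr hx), fun h x hx => h x ((hm x).mp hx)⟩
      · simp at h1
  | [w1], b :: c :: s =>
    constructor
    · intro hs
      exfalso
      have := hs (fun _ => true)
      rw [termVal_cons_cons] at this
      have hw1 : w1 ≠ [] := hu' w1 (by simp)
      simp [termVal, wordVal_eq_all (fun _ => true) w1 hw1] at this
    · rintro (⟨a, b', ha, hb, _⟩ | ⟨h1, h2⟩)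
      · simp at hb
      · simp at h1
  | a :: b :: t, [w2] =>
    constructor
    · intro hs
      exfalso
      have := hs (fun _ => true)
      rw [termVal_cons_cons] at this
      have hw2 : w2 ≠ [] := hv' w2 (by simp)
      simp [termVal, wordVal_eq_all (fun _ => true) w2 hw2] at this
    · rintro (⟨a', b', ha, hb, _⟩ | ⟨h1, h2⟩)
      · simp at ha
      · simp at h2
  | a :: b :: t, c :: d :: s =>
    constructor
    · intro _
      right
      constructor <;> simp [List.length]
    · intro _
      intro φ
      rw [termVal_cons_cons, termVal_cons_cons]
end

section
/- The semiring Z₇ satisfies the identity u ≈ v if and only if for every variable x, the number of entries of u equal to the one-letter word x is odd exactly when the number of entries of v equal to the one-letter word x is odd (equivalently, { w : |w| = 1, occ(w,u) is odd } = { w : |w| = 1, occ(w,v) is odd }). -/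
/-!
In `Z₇` every product is `false`, so a word takes the value `φ x` if it is the one-letter word
`[x]` and `false` otherwise; as addition is `xor`, the value of a term `u` is the parity of
`∑_{φ x} occ([x], u)`. The indicator assignment of a single variable `x` recovers the parity of
`occ([x], u)`, and conversely these parities determine the parity of every such sum.
-/

theorem List.foldl_xor_eq_xor_odd_countP {α : Type*} (g : α → Bool) (l : List α) (b : Bool) :
    l.foldl (fun acc a => xor acc (g a)) b = xor b (decide (Odd (l.countP g))) := by
  induction l generalizing b with
  | nil => simp
  | cons a l ih =>
    rw [List.foldl_cons, ih, List.countP_cons]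
    cases g a <;> cases b <;> grind

theorem List.countP_eq_sum_count {α : Type*} [BEq α] [LawfulBEq α] (p : α → Bool) (l : List α)
    (s : Finset α) (hs : ∀ a ∈ l, a ∈ s) :
    l.countP p = ∑ a ∈ s with p a, l.count a := by
  induction l with
  | nil => simp
  | cons b l ih =>
    have hb : b ∈ s := hs b List.mem_cons_self
    simp only [List.countP_cons, List.count_cons, Finset.sum_add_distrib,
      ih fun a ha => hs a (List.mem_cons_of_mem b ha)]
    congr 1
    classical
    simp only [beq_iff_eq]
    rw [Finset.sum_ite_eq]
    simp [hb]

theorem termVal_xor_eq_odd_countP (mul : Bool → Bool → Bool) (φ : ℕ → Bool) (u : List (List ℕ)) :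
    termVal (fun x y => xor x y) mul φ u = decide (Odd (u.countP (wordVal mul φ))) := by
  rw [← Bool.false_xor (decide _), ← List.foldl_xor_eq_xor_odd_countP]
  cases u <;> simp [termVal]

theorem wordVal_zero_mul_eq_true {φ : ℕ → Bool} {w : List ℕ} :
    wordVal (fun _ _ => false) φ w = true ↔ ∃ x, w = [x] ∧ φ x = true := by
  match w with
  | [] => simp [wordVal]
  | [a] => simp [wordVal]
  | a :: b :: rest => simp [wordVal, List.foldl_fixed']

theorem countP_wordVal_zero_mul_eq_count (u : List (List ℕ)) (x : ℕ) :
    u.countP (wordVal (fun _ _ => false) (fun y => decide (y = x))) = u.count [x] := by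
  refine List.countP_congr fun w _ => ?_
  simp [wordVal_zero_mul_eq_true]

theorem Z7_satisfies_iff_general (u v : List (List ℕ)) :
    Satisfies (fun x y => xor x y) (fun _ _ => false) u v ↔
      (∀ x : ℕ, (Odd (u.count [x]) ↔ Odd (v.count [x]))) := by
  simp only [Satisfies, termVal_xor_eq_odd_countP, decide_eq_decide]
  constructor
  · intro h x
    simpa only [countP_wordVal_zero_mul_eq_count] using h (fun y => decide (y = x))
  · intro h φ
    rw [List.countP_eq_sum_count _ u (u ++ v).toFinset (by simp_all),
      List.countP_eq_sum_count _ v (u ++ v).toFinset (by simp_all),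
      Nat.odd_iff, Nat.odd_iff, Nat.ModEq.sum fun w hw => ?_]
    obtain ⟨x, rfl, -⟩ := wordVal_zero_mul_eq_true.mp (Finset.mem_filter.mp hw).2
    have hx := h x
    simp only [Nat.odd_iff] at hx
    unfold Nat.ModEq
    omega

/-- Lemma 1.1(9): `Z₇` (addition `xor`, multiplication constantly `false`) satisfies
`u ≈ v` iff for every variable `x`, the one-letter word `[x]` occurs an odd number
of times in `u` exactly when it occurs an odd number of times in `v`. -/
theorem Z7_satisfies_iff (u v : List (List ℕ))
    (hu : u ≠ []) (hv : v ≠ []) (hu' : ∀ w ∈ u, w ≠ []) (hv' : ∀ w ∈ v, w ≠ []) :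
    Satisfies (fun x y => xor x y) (fun _ _ => false) u v ↔
      (∀ x : ℕ, (Odd (u.count [x]) ↔ Odd (v.count [x]))) :=
  Z7_satisfies_iff_general u v
end

section
/- Let S be a semiring in which (xy)² = xy holds for all x, y ∈ S. Then x³ = x² for all x ∈ S. -/
/-- A semiring in the sense of the paper: an additive commutative semigroup and a
multiplicative semigroup satisfying both distributive laws; no additive or
multiplicative identity is assumed. -/
class SRng (S : Type*) extends AddCommSemigroup S, Semigroup S where
  left_distrib : ∀ a b c : S, a * (b + c) = a * b + a * c
  right_distrib : ∀ a b c : S, (a + b) * c = a * c + b * c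

theorem cube_eq_square_of_mul_idem (S : Type*) [SRng S]
    (h : ∀ x y : S, (x * y) * (x * y) = x * y) :
    ∀ x : S, x * x * x = x * x := by
  intro x
  have h4 : (x * x) * (x * x) = x * x := h x x
  have h6 : (x * x * x) * (x * x * x) = x * x * x := h (x * x) x
  calc x * x * x = (x * x * x) * (x * x * x) := h6.symm
    _ = ((x * x) * (x * x)) * (x * x) := by simp [mul_assoc]
    _ = x * x := by rw [h4, h4]
end

section
/- Let S be a semiring in which xyzt = xzyt and (xy)² = xy hold for all x, y, z, t ∈ S. Then x²y = xy and xy² = xy for all x, y ∈ S. -/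
theorem sq_absorb_of_medial_and_mul_idem (S : Type*) [SRng S]
    (h1 : ∀ x y z t : S, x * y * z * t = x * z * y * t)
    (h2 : ∀ x y : S, (x * y) * (x * y) = x * y) :
    ∀ x y : S, x * x * y = x * y ∧ x * (y * y) = x * y := by
  have A : ∀ x y : S, x * y = x * x * (y * y) := by
    intro x y
    calc x * y = x * y * (x * y) := (h2 x y).symm
      _ = x * y * x * y := by rw [← mul_assoc]
      _ = x * x * y * y := h1 x y x y
      _ = x * x * (y * y) := by rw [mul_assoc]
  intro x y
  constructor
  · calc x * x * y = (x * x) * (x * x) * (y * y) := A (x * x) y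
      _ = (x * x) * (y * y) := by rw [h2 x x]
      _ = x * y := (A x y).symm
  · calc x * (y * y) = x * x * ((y * y) * (y * y)) := A x (y * y)
      _ = x * x * (y * y) := by rw [h2 y y]
      _ = x * y := (A x y).symm
end

section
/- Let S be a semiring in which the identities x²y = xy, xy² = xy, x + yz = x + yz + 2xz, and x + yz = x + yz + 2yx hold for all x, y, z ∈ S. Then x + yz = x + yz + 2x² for all x, y, z ∈ S. -/
theorem add_sq_absorption (S : Type*) [SRng S]
    (h1 : ∀ x y : S, x * x * y = x * y)
    (h2 : ∀ x y : S, x * (y * y) = x * y)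
    (h3 : ∀ x y z : S, x + y * z = x + y * z + (x * z + x * z))
    (h4 : ∀ x y z : S, x + y * z = x + y * z + (y * x + y * x)) :
    ∀ x y z : S, x + y * z = x + y * z + (x * x + x * x) := by
  intro x y z
  have A : x + y * z + (x * z + x * z) = x + y * z := (h3 x y z).symm
  have B : x + y * z + (x * (y * z) + x * (y * z)) = x + y * z := by
    have hB := (h3 x y (y * z)).symm
    rwa [← mul_assoc, h1] at hB
  have E0 : x + y * z + (x * z + x * z) + (x * z + x * z)
      + (x * (y * z) + x * (y * z)) = x + y * z := by
    rw [A, A, B]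
  have K := h4 (x + y * z + x * z) x z
  rw [SRng.left_distrib, SRng.left_distrib, ← mul_assoc x x z, h1] at K
  -- K : (x+y*z+x*z) + x*z = (x+y*z+x*z) + x*z + ((x*x + (x*(y*z) + x*z)) + (x*x + (x*(y*z) + x*z)))
  calc x + y * z = x + y * z + (x * z + x * z) := h3 x y z
    _ = x + y * z + x * z + x * z := (add_assoc _ _ _).symm
    _ = x + y * z + x * z + x * z
        + ((x * x + x * (y * z) + x * z) + (x * x + x * (y * z) + x * z)) := K
    _ = x + y * z + (x * z + x * z) + (x * z + x * z)
        + (x * (y * z) + x * (y * z)) + (x * x + x * x) := by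
          simp only [add_assoc, add_left_comm, add_comm]
    _ = x + y * z + (x * x + x * x) := by rw [E0]
end

section
/- Let S be a semiring in which the identities x²y = xy, xy² = xy, x + yz = x + yz + 2xz, and x + yz = x + yz + 2yx hold for all x, y, z ∈ S. Then x + yz = x + yz + 2xyz for all x, y, z ∈ S. -/
theorem add_xyz_absorption (S : Type*) [SRng S]
    (h1 : ∀ x y : S, x * x * y = x * y)
    (h2 : ∀ x y : S, x * (y * y) = x * y)
    (h3 : ∀ x y z : S, x + y * z = x + y * z + (x * z + x * z))
    (h4 : ∀ x y z : S, x + y * z = x + y * z + (y * x + y * x)) :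
    ∀ x y z : S, x + y * z = x + y * z + (x * y * z + x * y * z) := by
  intro x y z
  have h := h3 x y (y * z)
  rw [← mul_assoc y y z, h1] at h
  simpa [← mul_assoc] using h
end

section
/- Let S be a semiring in which the identities x²y = xy, xy² = xy, x + yz = x + yz + 2xz, and x + yz = x + yz + 2yx hold for all x, y, z ∈ S. Then x + yz = x + yz + 2yzx for all x, y, z ∈ S. -/
theorem add_yzx_absorption (S : Type*) [SRng S]
    (h1 : ∀ x y : S, x * x * y = x * y)
    (h2 : ∀ x y : S, x * (y * y) = x * y)
    (h3 : ∀ x y z : S, x + y * z = x + y * z + (x * z + x * z))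
    (h4 : ∀ x y z : S, x + y * z = x + y * z + (y * x + y * x)) :
    ∀ x y z : S, x + y * z = x + y * z + (y * z * x + y * z * x) := by
  intro x y z
  have := h4 x (y * z) z
  rwa [mul_assoc y z z, h2] at this
end

section
/- For every semiring S the following are equivalent: (i) for all x, y, z, t ∈ S the ten identities x²y = xy, xy² = xy, xyzt = xzyt, (xy)² = xy, x + yz = x + yz + 2xz, x + yz = x + yz + 2yx, x + yz = x + yz + 2x², x + yz = x + yz + 2xyz, x + yz = x + yz + 2yzx, and x + y = x + 3y hold; (ii) for all x, y, z, t ∈ S the five identities xyzt = xzyt, (xy)² = xy, x + yz = x + yz + 2xz, x + yz = x + yz + 2yx, and x + y = x + 3y hold. -/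
theorem ten_identities_iff_five_identities (S : Type*) [SRng S] :
    (∀ x y z t : S,
        x * x * y = x * y ∧
        x * (y * y) = x * y ∧
        x * y * z * t = x * z * y * t ∧
        (x * y) * (x * y) = x * y ∧
        x + y * z = x + y * z + (x * z + x * z) ∧
        x + y * z = x + y * z + (y * x + y * x) ∧
        x + y * z = x + y * z + (x * x + x * x) ∧
        x + y * z = x + y * z + (x * y * z + x * y * z) ∧
        x + y * z = x + y * z + (y * z * x + y * z * x) ∧
        x + y = x + (y + y + y)) ↔
    (∀ x y z t : S,
        x * y * z * t = x * z * y * t ∧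
        (x * y) * (x * y) = x * y ∧
        x + y * z = x + y * z + (x * z + x * z) ∧
        x + y * z = x + y * z + (y * x + y * x) ∧
        x + y = x + (y + y + y)) := by
  constructor
  · intro h x y z t
    obtain ⟨_, _, h3, h4, h5, h6, _, _, _, h10⟩ := h x y z t
    exact ⟨h3, h4, h5, h6, h10⟩
  · intro h x y z t
    have A : ∀ a b c d : S, a * b * c * d = a * c * b * d := fun a b c d => (h a b c d).1
    have B : ∀ a b : S, (a * b) * (a * b) = a * b := fun a b => (h a b a a).2.1
    have C : ∀ a b c : S, a + b * c = a + b * c + (a * c + a * c) :=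
      fun a b c => (h a b c c).2.2.1
    have D : ∀ a b c : S, a + b * c = a + b * c + (b * a + b * a) :=
      fun a b c => (h a b c c).2.2.2.1
    have E : ∀ a b : S, a + b = a + (b + b + b) := fun a b => (h a b b b).2.2.2.2
    -- multiplicative consequences
    have key : ∀ a b : S, a * b = a * a * b * b := fun a b => by
      calc a * b = (a * b) * (a * b) := (B a b).symm
        _ = a * b * a * b := (mul_assoc _ _ _).symm
        _ = a * a * b * b := A a b a b
    have m1 : ∀ a b : S, a * a * b = a * b := fun a b => by
      calc a * a * b = a * a * (a * a) * b * b := key (a * a) b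
        _ = a * a * b * b := by rw [B a a]
        _ = a * b := (key a b).symm
    have m2 : ∀ a b : S, a * (b * b) = a * b := fun a b => by
      calc a * (b * b) = a * a * (b * b) * (b * b) := key a (b * b)
        _ = a * a * ((b * b) * (b * b)) := mul_assoc _ _ _
        _ = a * a * (b * b) := by rw [B b b]
        _ = a * a * b * b := (mul_assoc _ _ _).symm
        _ = a * b := (key a b).symm
    -- h8 : add 2xyz
    have h8 : x + y * z = x + y * z + (x * y * z + x * y * z) := by
      calc x + y * z = x + y * (y * z) := by rw [← mul_assoc, m1]
        _ = x + y * (y * z) + (x * (y * z) + x * (y * z)) := C x y (y * z)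
        _ = x + y * z + (x * y * z + x * y * z) := by
            rw [← mul_assoc x y z, ← mul_assoc y y z, m1]
    -- h9 : add 2yzx
    have h9 : x + y * z = x + y * z + (y * z * x + y * z * x) := by
      calc x + y * z = x + (y * z) * z := by rw [mul_assoc, m2]
        _ = x + (y * z) * z + ((y * z) * x + (y * z) * x) := D x (y * z) z
        _ = x + y * z + (y * z * x + y * z * x) := by rw [mul_assoc y z z, m2]
    -- h6 : add 2yx (from the five identities directly)
    have h6 : x + y * z = x + y * z + (y * x + y * x) := D x y z
    -- the "star" identity
    have star : x + y * z = x + y * z + (y * x + y * x) +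
        ((x * x + y * z * x + y * x) + (x * x + y * z * x + y * x)) := by
      have hA0 : (x + y * z + y * x) * x = x * x + y * z * x + y * x := by
        rw [SRng.right_distrib, SRng.right_distrib, mul_assoc y x x, m2]
      calc x + y * z = x + y * z + (y * x + y * x) := h6
        _ = (x + y * z + y * x) + y * x := by ac_rfl
        _ = (x + y * z + y * x) + y * x +
            ((x + y * z + y * x) * x + (x + y * z + y * x) * x) := C _ y x
        _ = x + y * z + (y * x + y * x) +
            ((x * x + y * z * x + y * x) + (x * x + y * z * x + y * x)) := by
            rw [hA0]; ac_rfl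
    -- h7 : add 2x²
    have h7 : x + y * z = x + y * z + (x * x + x * x) := by
      have big : x + y * z = x + y * z + (y * z * x + y * z * x) +
          (y * x + y * x) + (y * x + y * x) := by
        calc x + y * z = x + y * z + (y * x + y * x) := h6
          _ = x + y * z + (y * x + y * x) + (y * x + y * x) := by
              conv_lhs => rw [h6]
          _ = x + y * z + (y * z * x + y * z * x) + (y * x + y * x) + (y * x + y * x) := by
              conv_lhs => rw [h9]
      have final : x + y * z + (x * x + x * x) = x + y * z := by
        calc x + y * z + (x * x + x * x)
            = x + y * z + (y * z * x + y * z * x) + (y * x + y * x) + (y * x + y * x) +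
              (x * x + x * x) := by conv_lhs => rw [big]
          _ = x + y * z + (y * x + y * x) +
              ((x * x + y * z * x + y * x) + (x * x + y * z * x + y * x)) := by ac_rfl
          _ = x + y * z := star.symm
      exact final.symm
    refine ⟨m1 x y, m2 x y, A x y z t, B x y, C x y z, h6, h7, h8, h9, E x y⟩
end

section
/- Let S be a semiring in which x + y = x + 3y holds for all x, y ∈ S. Then (2x)(2y) = 2(xy) for all x, y ∈ S. -/
theorem double_mul_double (S : Type*) [SRng S]
    (h : ∀ x y : S, x + y = x + (y + y + y)) :
    ∀ x y : S, (x + x) * (y + y) = x * y + x * y := by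
  intro x y
  rw [SRng.right_distrib, SRng.left_distrib]
  rw [add_assoc, ← add_assoc (x*y) (x*y) (x*y), ← h (x*y) (x*y)]
end

section
/- Let S be a semiring in which x + y = x + 3y holds for all x, y ∈ S, and let E⁺(S) = { a ∈ S : a + a = a } be the set of additive idempotents of S. Then E⁺(S) = { 2a : a ∈ S }, and E⁺(S) is closed under both addition and multiplication (so it is a subsemiring of S). -/
theorem additive_idempotents_subsemiring (S : Type*) [SRng S]
    (h : ∀ x y : S, x + y = x + (y + y + y)) :
    ({a : S | a + a = a} = {x : S | ∃ a : S, x = a + a}) ∧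
    (∀ a b : S, a + a = a → b + b = b → (a + b) + (a + b) = a + b) ∧
    (∀ a b : S, a + a = a → b + b = b → a * b + a * b = a * b) := by
  refine ⟨?_, ?_, ?_⟩
  · ext x
    constructor
    · intro hx; exact ⟨x, hx.symm⟩
    · rintro ⟨a, rfl⟩
      have := h a a
      calc a + a + (a + a) = a + (a + a + a) := by rw [add_assoc, add_assoc]
        _ = a + a := (h a a).symm
  · intro a b ha hb
    calc (a + b) + (a + b) = (a + a) + (b + b) := by rw [add_assoc, add_assoc, add_comm b (a+b), add_assoc]
      _ = a + b := by rw [ha, hb]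
  · intro a b ha hb
    calc a * b + a * b = (a + a) * b := (SRng.right_distrib a a b).symm
      _ = a * b := by rw [ha]
end

section
/- Let S be any semiring whose underlying type has exactly two elements. Then 2x + 2y = 2(x + y) and (2x)(2y) = 2(xy) for all x, y ∈ S. -/
lemma two_element_cover {S : Type*} (hcard : Nat.card S = 2) {a b : S} (hab : a ≠ b) :
    ∀ p : S, p = a ∨ p = b := by
  classical
  intro p
  by_contra h
  push_neg at h
  have hfin : Finite S := Nat.finite_of_card_ne_zero (by omega)
  have := Fintype.ofFinite S
  have h1 : ({a, b, p} : Finset S).card ≤ Nat.card S := by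
    rw [Nat.card_eq_fintype_card]
    exact Finset.card_le_univ _
  have hc : ({a, b, p} : Finset S).card = 3 := by
    rw [Finset.card_insert_of_notMem, Finset.card_insert_of_notMem, Finset.card_singleton]
    · simp [Ne.symm h.2]
    · simp [hab, Ne.symm h.1]
  omega

lemma key {S : Type*} [SRng S] (hcard : Nat.card S = 2) (z : S) :
    (z + z) + (z + z) = z + z := by
  by_cases hz : z + z = z
  · rw [hz, hz]
  · have cover := two_element_cover hcard (fun h => hz h.symm)
    rcases cover ((z + z) + (z + z)) with h4 | h4
    · exfalso
      rcases cover (z + (z + z)) with h3 | h3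
      · have e : (z + z) + (z + z) = z + z := by rw [add_assoc, h3]
        exact hz (e.symm.trans h4)
      · have e : (z + z) + (z + z) = z + z := by rw [add_assoc, h3, h3]
        exact hz (e.symm.trans h4)
    · exact h4

theorem two_element_doubling_identities (S : Type*) [SRng S] (hcard : Nat.card S = 2) :
    ∀ x y : S, (x + x) + (y + y) = (x + y) + (x + y) ∧ (x + x) * (y + y) = x * y + x * y := by
  intro x y
  constructor
  · exact add_add_add_comm x x y y
  · have h : (x + x) * (y + y) = (x * y + x * y) + (x * y + x * y) := by
      rw [SRng.right_distrib, SRng.left_distrib]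
    rw [h, key hcard]
end
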